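/- Given any L-layer, single-head, d-dimensional linear-attention transformer with an appended EOS (all-zero) token, there exists an L-layer, two-head, 2d-dimensional linear-attention transformer without the EOS token computing the same output. Concretely: with update rule Z_l = Z_{l−1} + V_l Z_{l−1} M (Z_{l−1}ᵀ Q_l Z_{l−1} + P_l) on Z ∈ R^{d×(d_p+1)} whose last column of Z₀ is zero, M = diag(I_{d_p}, 0), and output the last column of Z_L; define two-head parameters V̄¹_l = [[V_l,0],[0,0]], Q̄¹_l = [[Q_l,0],[0,0]], P̄¹_l = (P_l)_{1:d_p,1:d_p}, V̄²_l = [[0,0],[V_l,0]], Q̄²_l = [[0,Q_l],[0,0]], P̄²_l = [0, (P_l)_{:,d_p+1}] with update Z̄_l = Z̄_{l−1} + Σ_h V̄ʰ_l Z̄_{l−1}(Z̄_{l−1}ᵀ Q̄ʰ_l Z̄_{l−1} + P̄ʰ_l). Then for every Z ∈ R^{d×d_p}, setting Z₀ = [Z, 0] and Z̄₀ = [Z; 0], the invariant Z̄_l = [[(Z_l)_{:,1:d_p}],[0 | (Z_l)_{:,d_p+1} in last column]] holds for all l, and in particular the two networks produce identical outputs. -/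
import Mathlib


open Matrix

/-- One layer of a single-head linear-attention transformer:
Z ↦ Z + V Z M (Zᵀ Q Z + P). -/
noncomputable def tfStep (d N : ℕ) (V Q : Matrix (Fin d) (Fin d) ℝ)
    (M P : Matrix (Fin N) (Fin N) ℝ) (Z : Matrix (Fin d) (Fin N) ℝ) :
    Matrix (Fin d) (Fin N) ℝ :=
  Z + V * Z * M * (Zᵀ * Q * Z + P)

/-- Iterated single-head linear-attention layers. -/
noncomputable def tfSeq (d N : ℕ) (V Q : ℕ → Matrix (Fin d) (Fin d) ℝ)
    (M : Matrix (Fin N) (Fin N) ℝ) (P : ℕ → Matrix (Fin N) (Fin N) ℝ)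
    (Z0 : Matrix (Fin d) (Fin N) ℝ) : ℕ → Matrix (Fin d) (Fin N) ℝ
  | 0 => Z0
  | l + 1 => tfStep d N (V l) (Q l) M (P l) (tfSeq d N V Q M P Z0 l)

/-- One layer of a two-head linear-attention transformer (no mask):
Z ↦ Z + Σₕ Vʰ Z (Zᵀ Qʰ Z + Pʰ). -/
noncomputable def tf2Step (d N : ℕ)
    (V1 Q1 V2 Q2 : Matrix (Fin d ⊕ Fin d) (Fin d ⊕ Fin d) ℝ)
    (P1 P2 : Matrix (Fin N) (Fin N) ℝ) (Z : Matrix (Fin d ⊕ Fin d) (Fin N) ℝ) :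
    Matrix (Fin d ⊕ Fin d) (Fin N) ℝ :=
  Z + V1 * Z * (Zᵀ * Q1 * Z + P1) + V2 * Z * (Zᵀ * Q2 * Z + P2)

/-- Iterated two-head linear-attention layers. -/
noncomputable def tf2Seq (d N : ℕ)
    (V1 Q1 V2 Q2 : ℕ → Matrix (Fin d ⊕ Fin d) (Fin d ⊕ Fin d) ℝ)
    (P1 P2 : ℕ → Matrix (Fin N) (Fin N) ℝ)
    (Z0 : Matrix (Fin d ⊕ Fin d) (Fin N) ℝ) : ℕ → Matrix (Fin d ⊕ Fin d) (Fin N) ℝ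
  | 0 => Z0
  | l + 1 => tf2Step d N (V1 l) (Q1 l) (V2 l) (Q2 l) (P1 l) (P2 l)
      (tf2Seq d N V1 Q1 V2 Q2 P1 P2 Z0 l)

noncomputable def embT (d m : ℕ) (A : Matrix (Fin d) (Fin (m + 2)) ℝ) :
    Matrix (Fin d ⊕ Fin d) (Fin (m + 1)) ℝ :=
  Matrix.fromRows (A.submatrix id Fin.castSucc)
    (Matrix.of fun i j => if j = Fin.last m then A i (Fin.last (m + 1)) else 0)

lemma tfStep_entry {d m : ℕ} (V Q : Matrix (Fin d) (Fin d) ℝ)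
    (P : Matrix (Fin (m + 2)) (Fin (m + 2)) ℝ) (A : Matrix (Fin d) (Fin (m + 2)) ℝ)
    (i : Fin d) (c : Fin (m + 2)) :
    tfStep d (m + 2) V Q
      (Matrix.diagonal fun i => if i = Fin.last (m + 1) then (0 : ℝ) else 1) P A i c
      = A i c + ∑ k : Fin (m + 1),
          (V * A) i k.castSucc * ((Aᵀ * Q * A) k.castSucc c + P k.castSucc c) := by
  set M' : Matrix (Fin (m + 2)) (Fin (m + 2)) ℝ :=
    Matrix.diagonal fun i => if i = Fin.last (m + 1) then (0 : ℝ) else 1 with hM'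
  have h1 : (V * A * M' * (Aᵀ * Q * A + P)) i c
      = ∑ k, (V * A * M') i k * (Aᵀ * Q * A + P) k c := Matrix.mul_apply
  have h2 : ∀ k, (V * A * M') i k
      = (V * A) i k * (if k = Fin.last (m + 1) then (0 : ℝ) else 1) := fun k =>
    Matrix.mul_diagonal _ _ _ _
  rw [tfStep, Matrix.add_apply, h1, Fin.sum_univ_castSucc]
  simp [h2, (Fin.castSucc_lt_last _).ne, Matrix.add_apply, mul_add]

lemma key_step {d m : ℕ} (V Q : Matrix (Fin d) (Fin d) ℝ)
    (P : Matrix (Fin (m + 2)) (Fin (m + 2)) ℝ) (A : Matrix (Fin d) (Fin (m + 2)) ℝ) :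
    tf2Step d (m + 1) (Matrix.fromBlocks V 0 0 0) (Matrix.fromBlocks Q 0 0 0)
      (Matrix.fromBlocks 0 0 V 0) (Matrix.fromBlocks 0 Q 0 0)
      (P.submatrix Fin.castSucc Fin.castSucc)
      (Matrix.of fun i j => if j = Fin.last m then P i.castSucc (Fin.last (m + 1)) else 0)
      (embT d m A)
    = embT d m (tfStep d (m + 2) V Q
        (Matrix.diagonal fun i => if i = Fin.last (m + 1) then (0 : ℝ) else 1) P A) := by
  set Zb := embT d m A with hZb
  set Vb1 : Matrix (Fin d ⊕ Fin d) (Fin d ⊕ Fin d) ℝ := Matrix.fromBlocks V 0 0 0 with hVb1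
  set Vb2 : Matrix (Fin d ⊕ Fin d) (Fin d ⊕ Fin d) ℝ := Matrix.fromBlocks 0 0 V 0 with hVb2
  set Qb1 : Matrix (Fin d ⊕ Fin d) (Fin d ⊕ Fin d) ℝ := Matrix.fromBlocks Q 0 0 0 with hQb1
  set Qb2 : Matrix (Fin d ⊕ Fin d) (Fin d ⊕ Fin d) ℝ := Matrix.fromBlocks 0 Q 0 0 with hQb2
  set Pb2 : Matrix (Fin (m + 1)) (Fin (m + 1)) ℝ :=
    Matrix.of fun i j => if j = Fin.last m then P i.castSucc (Fin.last (m + 1)) else 0 with hPb2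
  have fl : ∀ (a : Fin d) (k : Fin (m + 1)), Zb (Sum.inl a) k = A a k.castSucc := fun a k => rfl
  have fr : ∀ (a : Fin d) (k : Fin (m + 1)),
      Zb (Sum.inr a) k = if k = Fin.last m then A a (Fin.last (m + 1)) else 0 := fun a k => rfl
  have hV1l : ∀ (i : Fin d) (k : Fin (m + 1)),
      (Vb1 * Zb) (Sum.inl i) k = (V * A) i k.castSucc := by
    intro i k
    simp [hVb1, hVb2, hQb1, hQb2, Matrix.mul_apply, Fintype.sum_sum_type, fl, fr]
  have hV1r : ∀ (i : Fin d) (k : Fin (m + 1)),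
      (Vb1 * Zb) (Sum.inr i) k = 0 := by
    intro i k
    simp [hVb1, hVb2, hQb1, hQb2, Matrix.mul_apply, Fintype.sum_sum_type]
  have hV2l : ∀ (i : Fin d) (k : Fin (m + 1)),
      (Vb2 * Zb) (Sum.inl i) k = 0 := by
    intro i k
    simp [hVb1, hVb2, hQb1, hQb2, Matrix.mul_apply, Fintype.sum_sum_type]
  have hV2r : ∀ (i : Fin d) (k : Fin (m + 1)),
      (Vb2 * Zb) (Sum.inr i) k = (V * A) i k.castSucc := by
    intro i k
    simp [hVb1, hVb2, hQb1, hQb2, Matrix.mul_apply, Fintype.sum_sum_type, fl]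
  have hQ1 : ∀ (k j : Fin (m + 1)),
      (Zbᵀ * Qb1 * Zb) k j = (Aᵀ * Q * A) k.castSucc j.castSucc := by
    intro k j
    simp [hVb1, hVb2, hQb1, hQb2, Matrix.mul_apply, Fintype.sum_sum_type, fl, fr, Finset.sum_mul]
  have hQ2 : ∀ (k j : Fin (m + 1)),
      (Zbᵀ * Qb2 * Zb) k j =
        if j = Fin.last m then (Aᵀ * Q * A) k.castSucc (Fin.last (m + 1)) else 0 := by
    intro k j
    by_cases hj : j = Fin.last m <;>
      simp [hj, hVb1, hVb2, hQb1, hQb2, Matrix.mul_apply, Fintype.sum_sum_type, fl, fr, Finset.sum_mul]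
  ext (i | i) j
  · have e1 : (Vb1 * Zb *
        (Zbᵀ * Qb1 * Zb + P.submatrix Fin.castSucc Fin.castSucc))
          (Sum.inl i) j = ∑ k, (Vb1 * Zb) (Sum.inl i) k *
            ((Zbᵀ * Qb1 * Zb) k j
              + P k.castSucc j.castSucc) := by
      rw [Matrix.mul_apply]; rfl
    have e2 : (Vb2 * Zb *
        (Zbᵀ * Qb2 * Zb + Pb2))
          (Sum.inl i) j = ∑ k, (Vb2 * Zb) (Sum.inl i) k *
            ((Zbᵀ * Qb2 * Zb) k j +
              if j = Fin.last m then P k.castSucc (Fin.last (m + 1)) else 0) := by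
      rw [Matrix.mul_apply]; rfl
    rw [tf2Step, Matrix.add_apply, Matrix.add_apply, e1, e2]
    simp only [hV1l, hV2l, hQ1, zero_mul, Finset.sum_const_zero, add_zero]
    show A i j.castSucc + _ = _
    rw [show embT d m (tfStep d (m + 2) V Q _ P A) (Sum.inl i) j
        = tfStep d (m + 2) V Q _ P A i j.castSucc from rfl, tfStep_entry]
  · have e1 : (Vb1 * Zb *
        (Zbᵀ * Qb1 * Zb + P.submatrix Fin.castSucc Fin.castSucc))
          (Sum.inr i) j = ∑ k, (Vb1 * Zb) (Sum.inr i) k *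
            ((Zbᵀ * Qb1 * Zb) k j
              + P k.castSucc j.castSucc) := by
      rw [Matrix.mul_apply]; rfl
    have e2 : (Vb2 * Zb *
        (Zbᵀ * Qb2 * Zb + Pb2))
          (Sum.inr i) j = ∑ k, (Vb2 * Zb) (Sum.inr i) k *
            ((Zbᵀ * Qb2 * Zb) k j +
              if j = Fin.last m then P k.castSucc (Fin.last (m + 1)) else 0) := by
      rw [Matrix.mul_apply]; rfl
    rw [tf2Step, Matrix.add_apply, Matrix.add_apply, e1, e2]
    simp only [hV1r, hV2r, hQ2, zero_mul, Finset.sum_const_zero, add_zero, zero_add]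
    rw [fr, show embT d m (tfStep d (m + 2) V Q _ P A) (Sum.inr i) j
        = if j = Fin.last m then tfStep d (m + 2) V Q _ P A i (Fin.last (m + 1)) else 0 from rfl]
    by_cases hj : j = Fin.last m
    · simp only [hj, if_true, tfStep_entry]
    · simp [hj]

/-- Any L-layer single-head d-dimensional linear-attention transformer with an
appended EOS (all-zero) token is simulated by the explicitly constructed
L-layer two-head 2d-dimensional transformer without the EOS token: the block
invariant holds at every layer and the outputs coincide. Here the number of
non-EOS tokens is d_p = m + 1. -/
theorem stmt_16 (d m L : ℕ)
    (V Q : ℕ → Matrix (Fin d) (Fin d) ℝ)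
    (P : ℕ → Matrix (Fin (m + 2)) (Fin (m + 2)) ℝ)
    (Z : Matrix (Fin d) (Fin (m + 1)) ℝ) :
    let M : Matrix (Fin (m + 2)) (Fin (m + 2)) ℝ :=
      Matrix.diagonal fun i => if i = Fin.last (m + 1) then 0 else 1
    let Z0 : Matrix (Fin d) (Fin (m + 2)) ℝ :=
      Matrix.of fun i j => Fin.lastCases 0 (fun j' => Z i j') j
    let V1 : ℕ → Matrix (Fin d ⊕ Fin d) (Fin d ⊕ Fin d) ℝ :=
      fun l => Matrix.fromBlocks (V l) 0 0 0
    let Q1 : ℕ → Matrix (Fin d ⊕ Fin d) (Fin d ⊕ Fin d) ℝ :=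
      fun l => Matrix.fromBlocks (Q l) 0 0 0
    let V2 : ℕ → Matrix (Fin d ⊕ Fin d) (Fin d ⊕ Fin d) ℝ :=
      fun l => Matrix.fromBlocks 0 0 (V l) 0
    let Q2 : ℕ → Matrix (Fin d ⊕ Fin d) (Fin d ⊕ Fin d) ℝ :=
      fun l => Matrix.fromBlocks 0 (Q l) 0 0
    let P1 : ℕ → Matrix (Fin (m + 1)) (Fin (m + 1)) ℝ :=
      fun l => (P l).submatrix Fin.castSucc Fin.castSucc
    let P2 : ℕ → Matrix (Fin (m + 1)) (Fin (m + 1)) ℝ :=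
      fun l => Matrix.of fun i j =>
        if j = Fin.last m then P l i.castSucc (Fin.last (m + 1)) else 0
    let Zb0 : Matrix (Fin d ⊕ Fin d) (Fin (m + 1)) ℝ :=
      Matrix.of fun i j => Sum.elim (fun i' => Z i' j) (fun _ => 0) i
    (∀ l : ℕ, ∀ i : Fin d, ∀ j : Fin (m + 1),
        tf2Seq d (m + 1) V1 Q1 V2 Q2 P1 P2 Zb0 l (Sum.inl i) j =
          tfSeq d (m + 2) V Q M P Z0 l i j.castSucc ∧
        tf2Seq d (m + 1) V1 Q1 V2 Q2 P1 P2 Zb0 l (Sum.inr i) j =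
          (if j = Fin.last m then tfSeq d (m + 2) V Q M P Z0 l i (Fin.last (m + 1))
            else 0)) ∧
    ∀ i : Fin d,
      tf2Seq d (m + 1) V1 Q1 V2 Q2 P1 P2 Zb0 L (Sum.inr i) (Fin.last m) =
        tfSeq d (m + 2) V Q M P Z0 L i (Fin.last (m + 1)) := by
  intro M Z0 V1 Q1 V2 Q2 P1 P2 Zb0
  have hmain : ∀ l, tf2Seq d (m + 1) V1 Q1 V2 Q2 P1 P2 Zb0 l
      = embT d m (tfSeq d (m + 2) V Q M P Z0 l) := by
    intro l
    induction l with
    | zero =>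
      ext (i | i) j
      · show Z i j = Fin.lastCases 0 (fun j' => Z i j') j.castSucc
        rw [Fin.lastCases_castSucc]
      · show (0 : ℝ) = if j = Fin.last m
            then Fin.lastCases 0 (fun j' => Z i j') (Fin.last (m + 1)) else 0
        rw [Fin.lastCases_last]
        simp
    | succ l ih =>
      show tf2Step d (m + 1) (V1 l) (Q1 l) (V2 l) (Q2 l) (P1 l) (P2 l)
          (tf2Seq d (m + 1) V1 Q1 V2 Q2 P1 P2 Zb0 l) = _
      rw [ih]
      exact key_step (V l) (Q l) (P l) (tfSeq d (m + 2) V Q M P Z0 l)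
  refine ⟨fun l i j => ⟨?_, ?_⟩, fun i => ?_⟩
  · rw [hmain l]; rfl
  · rw [hmain l]; rfl
  · rw [hmain L]
    show (if Fin.last m = Fin.last m then tfSeq d (m + 2) V Q M P Z0 L i (Fin.last (m + 1))
        else 0) = _
    rw [if_pos rfl]
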